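/- arXiv:2504.06453 — 2 statements merged into one kernel-verified Lean document; each statement's English description precedes it below -/
import Mathlib

section
/- For probability measures μ, ν on ℝ with finite first moment, the 1-Wasserstein distance equals the L¹ distance between their cumulative distribution functions: W₁(μ,ν) = ∫_ℝ |F_μ(v) − F_ν(v)| dv. -/
/-!
Both sides are integrals over thresholds `v`. By Tonelli, for any coupling `π`,
`∫ |x - y| dπ = ∫ π {exactly one of x ≤ v, y ≤ v} dv`, and that probability is at least
`|F_μ(v) - F_ν(v)|` since the marginals give the events `{x ≤ v}`, `{y ≤ v}` the masses
`F_μ(v)`, `F_ν(v)`. The quantile coupling `t ↦ (F_μ⁻¹(t), F_ν⁻¹(t))`, `t` uniform on `(0, 1)`,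
attains the bound: there the two events are `{t ≤ F_μ(v)}` and `{t ≤ F_ν(v)}`, which are nested.
-/

open MeasureTheory

/-- CDF of a measure on ℝ. -/
noncomputable def cdfFun (μ : Measure ℝ) (v : ℝ) : ℝ := (μ (Set.Iic v)).toReal

/-- 1-Wasserstein distance defined as the infimum over couplings of the expected distance. -/
noncomputable def W1 (μ ν : Measure ℝ) : ℝ :=
  sInf {c : ℝ | ∃ π : Measure (ℝ × ℝ), IsProbabilityMeasure π ∧
    π.map Prod.fst = μ ∧ π.map Prod.snd = ν ∧
    c = ∫ p : ℝ × ℝ, |p.1 - p.2| ∂π}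

open Set Filter ProbabilityTheory
open scoped symmDiff ENNReal

theorem ofReal_abs_sub_eq_volume_Ici_symmDiff_Ici (x y : ℝ) :
    ENNReal.ofReal |x - y| = volume (Ici x ∆ Ici y) := by
  wlog hxy : x ≤ y generalizing x y
  · rw [abs_sub_comm, symmDiff_comm]; exact this y x (le_of_not_ge hxy)
  rw [symmDiff_of_ge (Ici_subset_Ici.2 hxy), Ici_sdiff_Ici, Real.volume_Ico, abs_sub_comm,
    abs_of_nonneg (sub_nonneg.2 hxy)]

theorem lintegral_ofReal_abs_sub_eq_lintegral_measure_symmDiff {α : Type*}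
    [MeasurableSpace α] (π : Measure α) [SFinite π] {f g : α → ℝ} (hf : Measurable f)
    (hg : Measurable g) :
    ∫⁻ a, ENNReal.ofReal |f a - g a| ∂π = ∫⁻ v, π ((f ⁻¹' Iic v) ∆ (g ⁻¹' Iic v)) := by
  have hS : MeasurableSet ({q : α × ℝ | f q.1 ≤ q.2} ∆ {q | g q.1 ≤ q.2}) :=
    (measurableSet_le (hf.comp measurable_fst) measurable_snd).symmDiff
      (measurableSet_le (hg.comp measurable_fst) measurable_snd)
  calc ∫⁻ a, ENNReal.ofReal |f a - g a| ∂π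
      = ∫⁻ a, (∫⁻ v, (Ici (f a) ∆ Ici (g a)).indicator 1 v) ∂π := by
        simp_rw [lintegral_indicator_one (measurableSet_Ici.symmDiff measurableSet_Ici),
          ofReal_abs_sub_eq_volume_Ici_symmDiff_Ici]
    _ = ∫⁻ v, ∫⁻ a, ((f ⁻¹' Iic v) ∆ (g ⁻¹' Iic v)).indicator 1 a ∂π :=
        lintegral_lintegral_swap (measurable_one.indicator hS).aemeasurable
    _ = ∫⁻ v, π ((f ⁻¹' Iic v) ∆ (g ⁻¹' Iic v)) := by
        simp_rw [lintegral_indicator_one ((measurableSet_Iic.preimage hf).symmDiff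
          (measurableSet_Iic.preimage hg))]

theorem ofReal_abs_sub_le_of_sub_le {a b : ℝ} {c : ℝ≥0∞} (ha : 0 ≤ a) (hb : 0 ≤ b)
    (hab : ENNReal.ofReal a - ENNReal.ofReal b ≤ c)
    (hba : ENNReal.ofReal b - ENNReal.ofReal a ≤ c) :
    ENNReal.ofReal |a - b| ≤ c := by
  rw [abs_eq_max_neg, neg_sub, ENNReal.ofReal_max, ENNReal.ofReal_sub _ hb,
    ENNReal.ofReal_sub _ ha]
  exact max_le hab hba

theorem ofReal_abs_cdf_sub_le_measure_symmDiff {μ ν : Measure ℝ} [IsProbabilityMeasure μ]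
    [IsProbabilityMeasure ν] {π : Measure (ℝ × ℝ)} (h₁ : π.map Prod.fst = μ)
    (h₂ : π.map Prod.snd = ν) (v : ℝ) :
    ENNReal.ofReal |cdf μ v - cdf ν v| ≤ π ((Prod.fst ⁻¹' Iic v) ∆ (Prod.snd ⁻¹' Iic v)) := by
  have hμ : ENNReal.ofReal (cdf μ v) = π (Prod.fst ⁻¹' Iic v) := by
    rw [ofReal_cdf, ← h₁, Measure.map_apply measurable_fst measurableSet_Iic]
  have hν : ENNReal.ofReal (cdf ν v) = π (Prod.snd ⁻¹' Iic v) := by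
    rw [ofReal_cdf, ← h₂, Measure.map_apply measurable_snd measurableSet_Iic]
  refine ofReal_abs_sub_le_of_sub_le (cdf_nonneg μ v) (cdf_nonneg ν v) ?_ ?_
  · rw [hμ, hν]; exact le_measure_symmDiff
  · rw [hμ, hν, symmDiff_comm]; exact le_measure_symmDiff

theorem lintegral_ofReal_abs_cdf_sub_le {μ ν : Measure ℝ} [IsProbabilityMeasure μ]
    [IsProbabilityMeasure ν] {π : Measure (ℝ × ℝ)} [SFinite π] (h₁ : π.map Prod.fst = μ)
    (h₂ : π.map Prod.snd = ν) :
    ∫⁻ v, ENNReal.ofReal |cdf μ v - cdf ν v| ≤ ∫⁻ p, ENNReal.ofReal |p.1 - p.2| ∂π := by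
  rw [lintegral_ofReal_abs_sub_eq_lintegral_measure_symmDiff _ measurable_fst measurable_snd]
  exact lintegral_mono (ofReal_abs_cdf_sub_le_measure_symmDiff h₁ h₂)

theorem integrable_abs_fst_sub_snd {π : Measure (ℝ × ℝ)}
    (h₁ : Integrable (fun x : ℝ => |x|) (π.map Prod.fst))
    (h₂ : Integrable (fun x : ℝ => |x|) (π.map Prod.snd)) :
    Integrable (fun p : ℝ × ℝ => |p.1 - p.2|) π := by
  have i₁ := (integrable_map_measure continuous_abs.aestronglyMeasurable
    measurable_fst.aemeasurable).1 h₁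
  have i₂ := (integrable_map_measure continuous_abs.aestronglyMeasurable
    measurable_snd.aemeasurable).1 h₂
  refine (i₁.add i₂).mono' (by fun_prop) (ae_of_all _ fun p => ?_)
  simpa only [Real.norm_eq_abs, abs_abs, Pi.add_apply, Function.comp_apply] using abs_sub p.1 p.2

instance isProbabilityMeasure_volume_restrict_Ioo_zero_one :
    IsProbabilityMeasure (volume.restrict (Ioo (0 : ℝ) 1)) :=
  ⟨by simp⟩

theorem volume_restrict_Ioo_zero_one_Iic {a : ℝ} (ha : a ≤ 1) :
    volume.restrict (Ioo 0 1) (Iic a) = ENNReal.ofReal a := by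
  rw [Measure.restrict_apply measurableSet_Iic]
  refine le_antisymm ?_ ?_
  · calc volume (Iic a ∩ Ioo 0 1) ≤ volume (Ioc 0 a) :=
          measure_mono fun t ht => ⟨ht.2.1, ht.1⟩
      _ = ENNReal.ofReal a := by rw [Real.volume_Ioc, sub_zero]
  · calc ENNReal.ofReal a = volume (Ioo 0 a) := by rw [Real.volume_Ioo, sub_zero]
      _ ≤ volume (Iic a ∩ Ioo 0 1) :=
          measure_mono fun t ht => ⟨ht.2.le, ht.1, ht.2.trans_le ha⟩

theorem volume_restrict_Ioo_zero_one_Iic_symmDiff_Iic {a b : ℝ} (ha : a ∈ Icc 0 1)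
    (hb : b ∈ Icc 0 1) :
    volume.restrict (Ioo 0 1) (Iic a ∆ Iic b) = ENNReal.ofReal |a - b| := by
  wlog hab : a ≤ b generalizing a b
  · rw [abs_sub_comm, symmDiff_comm]; exact this hb ha (le_of_not_ge hab)
  rw [symmDiff_of_le (Iic_subset_Iic.2 hab),
    measure_sdiff (Iic_subset_Iic.2 hab) measurableSet_Iic.nullMeasurableSet (measure_ne_top _ _),
    volume_restrict_Ioo_zero_one_Iic ha.2, volume_restrict_Ioo_zero_one_Iic hb.2,
    ← ENNReal.ofReal_sub _ ha.1, abs_sub_comm, abs_of_nonneg (sub_nonneg.2 hab)]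

-- Only meaningful for `t ∈ (0, 1)`: otherwise the set is unbounded below or empty.
noncomputable def quantile (μ : Measure ℝ) (t : ℝ) : ℝ := sInf {x | t ≤ cdf μ x}

section Quantile

variable {μ : Measure ℝ} {t : ℝ}

theorem nonempty_setOf_le_cdf (ht : t < 1) : {x | t ≤ cdf μ x}.Nonempty :=
  ((tendsto_cdf_atTop μ).eventually_const_le ht).exists

theorem bddBelow_setOf_le_cdf (ht : 0 < t) : BddBelow {x | t ≤ cdf μ x} := by
  obtain ⟨x₀, hx₀⟩ := ((tendsto_cdf_atBot μ).eventually_lt_const ht).exists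
  refine ⟨x₀, fun y hy => ?_⟩
  by_contra! hyx
  exact (hy.trans (monotone_cdf μ hyx.le)).not_gt hx₀

theorem quantile_le_iff (ht : t ∈ Ioo 0 1) {v : ℝ} : quantile μ t ≤ v ↔ t ≤ cdf μ v := by
  refine ⟨fun h => ?_, fun h => csInf_le (bddBelow_setOf_le_cdf ht.1) h⟩
  refine ge_of_tendsto (((cdf μ).right_continuous v).tendsto.mono_left
    (nhdsWithin_mono v Ioi_subset_Ici_self)) ?_
  filter_upwards [self_mem_nhdsWithin] with w hw
  obtain ⟨y, hy, hyw⟩ := (csInf_lt_iff (bddBelow_setOf_le_cdf ht.1)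
    (nonempty_setOf_le_cdf ht.2)).1 (h.trans_lt hw)
  exact hy.trans (monotone_cdf μ hyw.le)

theorem monotoneOn_quantile : MonotoneOn (quantile μ) (Ioo 0 1) := fun _ ha _ hb hab =>
  le_csInf (nonempty_setOf_le_cdf hb.2) fun _ hy =>
    csInf_le (bddBelow_setOf_le_cdf ha.1) (hab.trans hy)

theorem aemeasurable_quantile : AEMeasurable (quantile μ) (volume.restrict (Ioo 0 1)) :=
  aemeasurable_restrict_of_monotoneOn measurableSet_Ioo monotoneOn_quantile

theorem preimage_quantile_Iic_ae_eq (v : ℝ) :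
    quantile μ ⁻¹' Iic v =ᵐ[volume.restrict (Ioo 0 1)] Iic (cdf μ v) :=
  ae_restrict_of_forall_mem measurableSet_Ioo fun _ ht => propext (quantile_le_iff ht)

theorem map_quantile [IsProbabilityMeasure μ] :
    (volume.restrict (Ioo 0 1)).map (quantile μ) = μ := by
  refine Measure.ext_of_Iic _ _ fun v => ?_
  rw [Measure.map_apply_of_aemeasurable aemeasurable_quantile measurableSet_Iic,
    measure_congr (preimage_quantile_Iic_ae_eq v),
    volume_restrict_Ioo_zero_one_Iic (cdf_le_one μ v), ofReal_cdf]

end Quantile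

noncomputable def quantileCoupling (μ ν : Measure ℝ) : Measure (ℝ × ℝ) :=
  (volume.restrict (Ioo 0 1)).map fun t => (quantile μ t, quantile ν t)

section QuantileCoupling

variable (μ ν : Measure ℝ)

theorem aemeasurable_quantile_prodMk :
    AEMeasurable (fun t => (quantile μ t, quantile ν t)) (volume.restrict (Ioo 0 1)) :=
  aemeasurable_quantile.prodMk aemeasurable_quantile

instance isProbabilityMeasure_quantileCoupling : IsProbabilityMeasure (quantileCoupling μ ν) :=
  Measure.isProbabilityMeasure_map (aemeasurable_quantile_prodMk μ ν)

theorem quantileCoupling_map_fst [IsProbabilityMeasure μ] :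
    (quantileCoupling μ ν).map Prod.fst = μ := by
  rw [quantileCoupling, AEMeasurable.map_map_of_aemeasurable measurable_fst.aemeasurable
    (aemeasurable_quantile_prodMk μ ν)]
  exact map_quantile

theorem quantileCoupling_map_snd [IsProbabilityMeasure ν] :
    (quantileCoupling μ ν).map Prod.snd = ν := by
  rw [quantileCoupling, AEMeasurable.map_map_of_aemeasurable measurable_snd.aemeasurable
    (aemeasurable_quantile_prodMk μ ν)]
  exact map_quantile

theorem quantileCoupling_symmDiff (v : ℝ) :
    quantileCoupling μ ν ((Prod.fst ⁻¹' Iic v) ∆ (Prod.snd ⁻¹' Iic v)) =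
      ENNReal.ofReal |cdf μ v - cdf ν v| := by
  rw [quantileCoupling, Measure.map_apply_of_aemeasurable (aemeasurable_quantile_prodMk μ ν)
    ((measurableSet_Iic.preimage measurable_fst).symmDiff
      (measurableSet_Iic.preimage measurable_snd)), preimage_symmDiff]
  exact (measure_congr
      ((preimage_quantile_Iic_ae_eq v).symmDiff (preimage_quantile_Iic_ae_eq v))).trans
    (volume_restrict_Ioo_zero_one_Iic_symmDiff_Iic ⟨cdf_nonneg μ v, cdf_le_one μ v⟩
      ⟨cdf_nonneg ν v, cdf_le_one ν v⟩)

theorem lintegral_quantileCoupling :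
    ∫⁻ p, ENNReal.ofReal |p.1 - p.2| ∂quantileCoupling μ ν =
      ∫⁻ v, ENNReal.ofReal |cdf μ v - cdf ν v| := by
  simp_rw [lintegral_ofReal_abs_sub_eq_lintegral_measure_symmDiff _ measurable_fst measurable_snd,
    quantileCoupling_symmDiff]

end QuantileCoupling

/-- For probability measures on ℝ with finite first moment, the
1-Wasserstein distance equals the L¹ distance between their CDFs. -/
theorem wasserstein_eq_integral_cdf
    (μ ν : Measure ℝ) [IsProbabilityMeasure μ] [IsProbabilityMeasure ν]
    (hμ : Integrable (fun x : ℝ => |x|) μ)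
    (hν : Integrable (fun x : ℝ => |x|) ν) :
    W1 μ ν = ∫ v : ℝ, |cdfFun μ v - cdfFun ν v| := by
  have hcost (π : Measure (ℝ × ℝ)) :
      ∫ p, |p.1 - p.2| ∂π = (∫⁻ p, ENNReal.ofReal |p.1 - p.2| ∂π).toReal :=
    integral_eq_lintegral_of_nonneg_ae (ae_of_all _ fun _ => abs_nonneg _) (by fun_prop)
  have hcdf : ∫ v, |cdfFun μ v - cdfFun ν v| =
      (∫⁻ v, ENNReal.ofReal |cdf μ v - cdf ν v|).toReal := by
    simp_rw [cdfFun, ← measureReal_def, ← cdf_eq_real]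
    exact integral_eq_lintegral_of_nonneg_ae (ae_of_all _ fun _ => abs_nonneg _)
      ((monotone_cdf μ).measurable.sub (monotone_cdf ν).measurable).abs.aestronglyMeasurable
  rw [hcdf]
  refine IsLeast.csInf_eq ⟨⟨quantileCoupling μ ν, inferInstance, quantileCoupling_map_fst μ ν,
    quantileCoupling_map_snd μ ν, by rw [hcost, lintegral_quantileCoupling]⟩, ?_⟩
  rintro c ⟨π, _, h₁, h₂, rfl⟩
  rw [hcost]
  exact ENNReal.toReal_mono (integrable_abs_fst_sub_snd (h₁ ▸ hμ) (h₂ ▸ hν)).lintegral_lt_top.ne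
    (lintegral_ofReal_abs_cdf_sub_le h₁ h₂)
end

section
/- For probability measures μ, ν on ℝ with finite r-th moment (r ≥ 1), if Z is uniformly distributed on (0,1), then (F_μ⁻¹(Z), F_ν⁻¹(Z)) is an optimal coupling, i.e., W_r(μ,ν)^r = ∫₀¹ |F_μ⁻¹(z) − F_ν⁻¹(z)|^r dz. -/
open MeasureTheory

/-- Generalized inverse (quantile function) of a measure on ℝ. -/
noncomputable def quantileFun (μ : Measure ℝ) (z : ℝ) : ℝ :=
  sInf {v : ℝ | z ≤ (μ (Set.Iic v)).toReal}

/-- r-th power of the r-Wasserstein distance, defined as the infimum over couplings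
of E[|U - V|^r]. -/
noncomputable def WrPow (r : ℝ) (μ ν : Measure ℝ) : ℝ :=
  sInf {c : ℝ | ∃ π : Measure (ℝ × ℝ), IsProbabilityMeasure π ∧
    π.map Prod.fst = μ ∧ π.map Prod.snd = ν ∧
    c = ∫ p : ℝ × ℝ, |p.1 - p.2| ^ r ∂π}

/-!
Put `φ x = |x| ^ r` and `ψ(u, v) = φ u + φ (-v) - φ (u - v) - φ 0`. The right derivative `φ'` of
the convex function `φ` is monotone and right-continuous, hence a Stieltjes function, and
`ψ(u, v) = ∫∫ (1{s + t ≤ u} - 1{s + t ≤ 0}) (1{t ≤ v} - 1{t ≤ 0}) dt dφ'(s)`.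
Integrating against a coupling `π` of `μ` and `ν` and swapping the integrals, `∫ ψ dπ` is a
quantity fixed by the marginals plus `∫∫ π([s + t, ∞) × [t, ∞)) dt dφ'(s)`. Every quadrant
probability is at most `min (μ [a, ∞)) (ν [t, ∞))`, and the comonotone coupling
`(F_μ⁻¹ Z, F_ν⁻¹ Z)` attains this bound because the events `{F_μ⁻¹ Z ≥ a}` and `{F_ν⁻¹ Z ≥ t}`
are nested. So the comonotone coupling maximizes `∫ ψ`, that is, minimizes `∫ |x - y| ^ r`.
-/

open ProbabilityTheory Set Filter Topology

section Quantile

variable {μ : Measure ℝ} [IsProbabilityMeasure μ]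

theorem quantileFun_eq_sInf_cdf (z : ℝ) : quantileFun μ z = sInf {v | z ≤ cdf μ v} := by
  simp only [quantileFun, cdf_eq_real, measureReal_def]

theorem quantileFun_le_iff {z : ℝ} (hz : z ∈ Ioo 0 1) (v : ℝ) :
    quantileFun μ z ≤ v ↔ z ≤ cdf μ v := by
  have hne : {v | z ≤ cdf μ v}.Nonempty :=
    ((tendsto_cdf_atTop μ).eventually_const_lt hz.2).exists.imp fun _ => le_of_lt
  have hbdd : BddBelow {v | z ≤ cdf μ v} := by
    obtain ⟨w, hw⟩ := ((tendsto_cdf_atBot μ).eventually_lt_const hz.1).exists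
    exact ⟨w, fun v hv => le_of_not_gt fun hvw => (hw.trans_le' (monotone_cdf μ hvw.le)).not_ge hv⟩
  rw [quantileFun_eq_sInf_cdf]
  refine ⟨fun h => ?_, fun h => csInf_le hbdd h⟩
  refine le_trans ?_ (monotone_cdf μ h)
  rw [← (cdf μ).iInf_Ioi_eq]
  refine le_ciInf fun w => ?_
  obtain ⟨s, hs, hsw⟩ := exists_lt_of_csInf_lt hne w.2
  exact hs.trans (monotone_cdf μ hsw.le)

theorem monotoneOn_quantileFun : MonotoneOn (quantileFun μ) (Ioo 0 1) := fun _ hz _ hz' hzz' =>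
  (quantileFun_le_iff hz _).2 <| hzz'.trans <| (quantileFun_le_iff hz' _).1 le_rfl

theorem aemeasurable_quantileFun : AEMeasurable (quantileFun μ) (volume.restrict (Ioo 0 1)) :=
  aemeasurable_restrict_of_monotoneOn measurableSet_Ioo monotoneOn_quantileFun

theorem map_quantileFun : (volume.restrict (Ioo 0 1)).map (quantileFun μ) = μ := by
  refine Measure.ext_of_Iic _ _ fun v => ?_
  have hpre : quantileFun μ ⁻¹' Iic v ∩ Ioo 0 1 = Iic (cdf μ v) ∩ Ioo 0 1 := by
    ext z
    simp only [mem_inter_iff, mem_preimage, mem_Iic]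
    exact and_congr_left fun hz => quantileFun_le_iff hz v
  rw [Measure.map_apply_of_aemeasurable aemeasurable_quantileFun measurableSet_Iic,
    Measure.restrict_apply' measurableSet_Ioo, hpre,
    measure_congr ((ae_eq_refl _).inter Ioo_ae_eq_Ioc), inter_comm, Ioc_inter_Iic,
    min_eq_right (cdf_le_one μ v), Real.volume_Ioc, sub_zero, ofReal_cdf]

end Quantile

theorem measure_preimage_inter_preimage_inter_eq_min {α β γ : Type*} [MeasurableSpace α]
    [LinearOrder α] [Preorder β] [Preorder γ] (m : Measure α) {s : Set α} {f : α → β} {g : α → γ}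
    (hf : MonotoneOn f s) (hg : MonotoneOn g s) {A : Set β} {B : Set γ} (hA : IsUpperSet A)
    (hB : IsUpperSet B) :
    m (f ⁻¹' A ∩ g ⁻¹' B ∩ s) = min (m (f ⁻¹' A ∩ s)) (m (g ⁻¹' B ∩ s)) := by
  have hnested : f ⁻¹' A ∩ s ⊆ g ⁻¹' B ∨ g ⁻¹' B ∩ s ⊆ f ⁻¹' A := by
    by_contra! h
    obtain ⟨⟨x, ⟨hxA, hxs⟩, hxB⟩, ⟨y, ⟨hyB, hys⟩, hyA⟩⟩ := And.imp not_subset.1 not_subset.1 h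
    rcases le_total x y with hxy | hyx
    · exact hyA (hA (hf hxs hys hxy) hxA)
    · exact hxB (hB (hg hys hxs hyx) hyB)
  rcases hnested with h | h
  · rw [min_eq_left (measure_mono (subset_inter h inter_subset_right))]
    congr 1
    grind
  · rw [min_eq_right (measure_mono (subset_inter h inter_subset_right))]
    congr 1
    grind

noncomputable def comonotoneCoupling (μ ν : Measure ℝ) : Measure (ℝ × ℝ) :=
  (volume.restrict (Ioo 0 1)).map fun z => (quantileFun μ z, quantileFun ν z)

section Comonotone

variable {μ ν : Measure ℝ} [IsProbabilityMeasure μ] [IsProbabilityMeasure ν]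

theorem aemeasurable_quantileFun_prod :
    AEMeasurable (fun z => (quantileFun μ z, quantileFun ν z)) (volume.restrict (Ioo 0 1)) :=
  aemeasurable_quantileFun.prodMk aemeasurable_quantileFun

theorem comonotoneCoupling_map_fst : (comonotoneCoupling μ ν).map Prod.fst = μ := by
  rw [comonotoneCoupling, AEMeasurable.map_map_of_aemeasurable measurable_fst.aemeasurable
    aemeasurable_quantileFun_prod]
  exact map_quantileFun

theorem comonotoneCoupling_map_snd : (comonotoneCoupling μ ν).map Prod.snd = ν := by
  rw [comonotoneCoupling, AEMeasurable.map_map_of_aemeasurable measurable_snd.aemeasurable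
    aemeasurable_quantileFun_prod]
  exact map_quantileFun

instance isProbabilityMeasure_comonotoneCoupling :
    IsProbabilityMeasure (comonotoneCoupling μ ν) := by
  have : IsProbabilityMeasure (volume.restrict (Ioo (0 : ℝ) 1)) := ⟨by simp⟩
  exact Measure.isProbabilityMeasure_map aemeasurable_quantileFun_prod

theorem comonotoneCoupling_prod {A B : Set ℝ} (hA : MeasurableSet A) (hB : MeasurableSet B)
    (hA' : IsUpperSet A) (hB' : IsUpperSet B) :
    comonotoneCoupling μ ν (A ×ˢ B) = min (μ A) (ν B) := by
  have hmap {ρ : Measure ℝ} [IsProbabilityMeasure ρ] {C : Set ℝ} (hC : MeasurableSet C) :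
      ρ C = volume (quantileFun ρ ⁻¹' C ∩ Ioo 0 1) := by
    conv_lhs => rw [← map_quantileFun (μ := ρ)]
    rw [Measure.map_apply_of_aemeasurable aemeasurable_quantileFun hC,
      Measure.restrict_apply' measurableSet_Ioo]
  rw [comonotoneCoupling, Measure.map_apply_of_aemeasurable aemeasurable_quantileFun_prod
    (hA.prod hB), Measure.restrict_apply' measurableSet_Ioo, hmap hA, hmap hB]
  exact measure_preimage_inter_preimage_inter_eq_min _ monotoneOn_quantileFun
    monotoneOn_quantileFun hA' hB'

theorem measure_prod_le_comonotoneCoupling {π : Measure (ℝ × ℝ)} (hπ₁ : π.map Prod.fst = μ)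
    (hπ₂ : π.map Prod.snd = ν) {A B : Set ℝ} (hA : MeasurableSet A) (hB : MeasurableSet B)
    (hA' : IsUpperSet A) (hB' : IsUpperSet B) :
    π (A ×ˢ B) ≤ comonotoneCoupling μ ν (A ×ˢ B) := by
  rw [comonotoneCoupling_prod hA hB hA' hB', ← hπ₁, ← hπ₂,
    Measure.map_apply measurable_fst hA, Measure.map_apply measurable_snd hB]
  exact le_min (measure_mono fun p hp => hp.1) (measure_mono fun p hp => hp.2)

end Comonotone

noncomputable def centeredIndicator {α : Type*} [Zero α] (s : Set α) (x : α) : ℝ :=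
  s.indicator 1 x - s.indicator 1 0

theorem integral_centeredIndicator_mul {α β : Type*} [MeasurableSpace α] [MeasurableSpace β]
    [Zero α] [Zero β] {μ : Measure α} {ν : Measure β} {π : Measure (α × β)}
    [IsProbabilityMeasure π] (hπ₁ : π.map Prod.fst = μ) (hπ₂ : π.map Prod.snd = ν) {A : Set α}
    {B : Set β} (hA : MeasurableSet A) (hB : MeasurableSet B) :
    ∫ p, centeredIndicator A p.1 * centeredIndicator B p.2 ∂π =
      π.real (A ×ˢ B) - A.indicator 1 0 * ν.real B - B.indicator 1 0 * μ.real A +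
        A.indicator 1 0 * B.indicator 1 0 := by
  set a : ℝ := A.indicator 1 0
  set b : ℝ := B.indicator 1 0
  have hA₁ : MeasurableSet (Prod.fst ⁻¹' A : Set (α × β)) := measurable_fst hA
  have hB₂ : MeasurableSet (Prod.snd ⁻¹' B : Set (α × β)) := measurable_snd hB
  have hint {C : Set (α × β)} (hC : MeasurableSet C) : Integrable (C.indicator (1 : α × β → ℝ)) π :=
    (integrable_const (1 : ℝ)).indicator hC
  have hexpand : (fun p : α × β => centeredIndicator A p.1 * centeredIndicator B p.2) =
      fun p => (A ×ˢ B).indicator 1 p - a * (Prod.snd ⁻¹' B).indicator 1 p -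
        b * (Prod.fst ⁻¹' A).indicator 1 p + a * b := by
    ext ⟨x, y⟩
    have h₁ : (Prod.fst ⁻¹' A).indicator (1 : α × β → ℝ) (x, y) = A.indicator 1 x := rfl
    have h₂ : (Prod.snd ⁻¹' B).indicator (1 : α × β → ℝ) (x, y) = B.indicator 1 y := rfl
    rw [indicator_prod_one, h₁, h₂, centeredIndicator, centeredIndicator]
    ring
  have hAB := hint (hA.prod hB)
  rw [hexpand, integral_add ?_ (integrable_const _), integral_sub ?_ ((hint hA₁).const_mul b),
    integral_sub hAB ((hint hB₂).const_mul a), integral_const_mul, integral_const_mul,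
    integral_indicator_one (hA.prod hB), integral_indicator_one hA₁, integral_indicator_one hB₂,
    integral_const, ← hπ₁, ← hπ₂, map_measureReal_apply measurable_fst hA,
    map_measureReal_apply measurable_snd hB]
  · simp
  · exact hAB.sub ((hint hB₂).const_mul a)
  · exact (hAB.sub ((hint hB₂).const_mul a)).sub ((hint hA₁).const_mul b)

theorem abs_centeredIndicator_le_one {α : Type*} [Zero α] (s : Set α) (x : α) :
    |centeredIndicator s x| ≤ 1 := by
  by_cases hx : x ∈ s <;> by_cases h0 : (0 : α) ∈ s <;> simp [centeredIndicator, hx, h0]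

theorem centeredIndicator_Ici (a x : ℝ) :
    centeredIndicator (Ici a) x = (Iic x).indicator 1 a - (Iic 0).indicator 1 a := by
  simp only [centeredIndicator, indicator_apply, mem_Ici, mem_Iic, Pi.one_apply]

theorem centeredIndicator_Ici_nonneg {a x : ℝ} (hx : 0 ≤ x) : 0 ≤ centeredIndicator (Ici a) x := by
  simp only [centeredIndicator, indicator_apply, mem_Ici, Pi.one_apply]
  split_ifs <;> linarith

theorem centeredIndicator_Ici_nonpos {a x : ℝ} (hx : x ≤ 0) : centeredIndicator (Ici a) x ≤ 0 := by
  simp only [centeredIndicator, indicator_apply, mem_Ici, Pi.one_apply]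
  split_ifs <;> linarith

theorem abs_le_abs_of_centeredIndicator_Ici_ne_zero {a x : ℝ}
    (h : centeredIndicator (Ici a) x ≠ 0) : |a| ≤ |x| := by
  simp only [centeredIndicator, indicator_apply, mem_Ici, Pi.one_apply] at h
  rw [← sq_le_sq]
  split_ifs at h <;> first | nlinarith | norm_num at h

theorem measurable_centeredIndicator_Ici :
    Measurable fun p : ℝ × ℝ => centeredIndicator (Ici p.1) p.2 := by
  simp only [centeredIndicator, indicator_apply, mem_Ici, Pi.one_apply]
  exact (Measurable.ite (measurableSet_le measurable_fst measurable_snd) measurable_const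
    measurable_const).sub (Measurable.ite (measurableSet_le measurable_fst measurable_const)
    measurable_const measurable_const)

theorem integral_indicator_Iic_sub_indicator_Iic_mul (μ : Measure ℝ) (g : ℝ → ℝ) (a b : ℝ) :
    ∫ t, ((Iic b).indicator 1 t - (Iic a).indicator 1 t) * g t ∂μ = ∫ t in a..b, g t ∂μ := by
  wlog hab : a ≤ b generalizing a b
  · rw [intervalIntegral.integral_symm, ← this b a (le_of_not_ge hab), ← integral_neg]
    congr 1 with t
    ring
  have hsdiff (t : ℝ) :
      ((Iic b).indicator 1 t - (Iic a).indicator 1 t) * g t = (Ioc a b).indicator g t := by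
    rw [← Pi.sub_apply, ← indicator_sdiff (Iic_subset_Iic.2 hab), Iic_sdiff_Iic]
    simp only [indicator_apply, Pi.one_apply]
    split_ifs <;> simp
  simp only [hsdiff]
  rw [integral_indicator measurableSet_Ioc, intervalIntegral.integral_of_le hab]

theorem integral_centeredIndicator_Ici_mul (μ : Measure ℝ) (g : ℝ → ℝ) (x : ℝ) :
    ∫ t, centeredIndicator (Ici t) x * g t ∂μ = ∫ t in 0..x, g t ∂μ := by
  simp only [centeredIndicator_Ici]
  exact integral_indicator_Iic_sub_indicator_Iic_mul μ g 0 x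

theorem StieltjesFunction.intervalIntegral_one (f : StieltjesFunction ℝ) (a b : ℝ) :
    ∫ _ in a..b, (1 : ℝ) ∂f.measure = f b - f a := by
  rw [intervalIntegral.integral_const', measureReal_def, measureReal_def, f.measure_Ioc,
    f.measure_Ioc, ENNReal.toReal_ofReal', ENNReal.toReal_ofReal', smul_eq_mul, mul_one]
  simpa only [neg_sub] using max_zero_sub_max_neg_zero_eq_self (f b - f a)

theorem integral_centeredIndicator_Ici_add (f : StieltjesFunction ℝ) (t x : ℝ) :
    ∫ s, centeredIndicator (Ici (s + t)) x ∂f.measure = f (x - t) - f (-t) := by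
  have hshift (s : ℝ) : centeredIndicator (Ici (s + t)) x =
      ((Iic (x - t)).indicator 1 s - (Iic (-t)).indicator 1 s) * 1 := by
    simp only [centeredIndicator, indicator_apply, mem_Ici, mem_Iic, Pi.one_apply, mul_one,
      le_sub_iff_add_le, le_neg_iff_add_nonpos_right]
  simp only [hshift]
  rw [integral_indicator_Iic_sub_indicator_Iic_mul, f.intervalIntegral_one]

/-- `-(c(u, v) - c(u, 0) - c(0, v) + c(0, 0))` for the cost `c(u, v) = φ (u - v)`. -/
noncomputable def mixedIncrement (φ : ℝ → ℝ) (p : ℝ × ℝ) : ℝ :=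
  φ p.1 + φ (-p.2) - φ (p.1 - p.2) - φ 0

/-- With `q = (t, s)` the quadrant has corner `(s + t, t)`: this shear turns the measure
`φ''(a - t) da dt` of corners into the product `volume ⊗ dφ'`. -/
noncomputable def centeredQuadrant (p q : ℝ × ℝ) : ℝ :=
  centeredIndicator (Ici (q.2 + q.1)) p.1 * centeredIndicator (Ici q.1) p.2

theorem measurable_centeredQuadrant : Measurable (Function.uncurry centeredQuadrant) := by
  unfold Function.uncurry centeredQuadrant
  exact (measurable_centeredIndicator_Ici.comp ((measurable_snd.snd.add measurable_snd.fst).prodMk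
    measurable_fst.fst)).mul (measurable_centeredIndicator_Ici.comp
    (measurable_snd.fst.prodMk measurable_fst.snd))

theorem integrable_centeredQuadrant (f : StieltjesFunction ℝ) (p : ℝ × ℝ) :
    Integrable (centeredQuadrant p) ((volume : Measure ℝ).prod f.measure) := by
  have hsupp : Function.support (centeredQuadrant p) ⊆ Metric.closedBall 0 (|p.1| + |p.2|) := by
    intro q hq
    have h₁ := abs_le_abs_of_centeredIndicator_Ici_ne_zero (left_ne_zero_of_mul hq)
    have h₂ := abs_le_abs_of_centeredIndicator_Ici_ne_zero (right_ne_zero_of_mul hq)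
    have h₃ : |q.2| ≤ |q.2 + q.1| + |q.1| := by
      simpa only [add_sub_cancel_right] using abs_sub (q.2 + q.1) q.1
    rw [mem_closedBall_zero_iff, Prod.norm_def, Real.norm_eq_abs, Real.norm_eq_abs]
    exact max_le (by linarith [abs_nonneg p.1]) (by linarith)
  refine (integrableOn_iff_integrable_of_support_subset hsupp).1 <|
    Measure.integrableOn_of_bounded measure_closedBall_lt_top.ne
      (measurable_centeredQuadrant.comp measurable_prodMk_left).aestronglyMeasurable (M := 1) <|
      ae_of_all _ fun q => ?_
  rw [centeredQuadrant, norm_mul, Real.norm_eq_abs, Real.norm_eq_abs]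
  exact mul_le_one₀ (abs_centeredIndicator_le_one _ _) (abs_nonneg _)
    (abs_centeredIndicator_le_one _ _)

section Representation

variable {φ : ℝ → ℝ} {f : StieltjesFunction ℝ}

theorem integral_centeredQuadrant (hφ : ∀ a b, ∫ t in a..b, f t = φ b - φ a) (p : ℝ × ℝ) :
    ∫ q, centeredQuadrant p q ∂(volume.prod f.measure) = mixedIncrement φ p := by
  have hanti (c : ℝ) : IntervalIntegrable (fun t => f (c - t)) volume 0 p.2 :=
    Antitone.intervalIntegrable fun _ _ h => f.mono (by linarith)
  calc ∫ q, centeredQuadrant p q ∂(volume.prod f.measure)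
      = ∫ t, centeredIndicator (Ici t) p.2 * (f (p.1 - t) - f (-t)) := by
        rw [integral_prod _ (integrable_centeredQuadrant f p)]
        congr 1 with t
        rw [← integral_centeredIndicator_Ici_add, ← integral_const_mul]
        simp only [centeredQuadrant, mul_comm]
    _ = ∫ t in 0..p.2, (f (p.1 - t) - f (-t)) := integral_centeredIndicator_Ici_mul _ _ _
    _ = mixedIncrement φ p := by
        rw [intervalIntegral.integral_sub (hanti p.1) (by simpa using hanti 0),
          intervalIntegral.integral_comp_sub_left (fun t => f t),
          intervalIntegral.integral_comp_neg (fun t => f t), hφ, hφ, mixedIncrement]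
        simp only [sub_zero, neg_zero]
        ring

theorem integral_norm_centeredQuadrant (hφ : ∀ a b, ∫ t in a..b, f t = φ b - φ a) (p : ℝ × ℝ) :
    ∫ q, ‖centeredQuadrant p q‖ ∂(volume.prod f.measure) = |mixedIncrement φ p| := by
  have hsign : (∀ q, 0 ≤ centeredQuadrant p q) ∨ (∀ q, centeredQuadrant p q ≤ 0) := by
    rcases le_total 0 p.1 with h₁ | h₁ <;> rcases le_total 0 p.2 with h₂ | h₂
    · exact .inl fun q => mul_nonneg (centeredIndicator_Ici_nonneg h₁)
        (centeredIndicator_Ici_nonneg h₂)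
    · exact .inr fun q => mul_nonpos_of_nonneg_of_nonpos (centeredIndicator_Ici_nonneg h₁)
        (centeredIndicator_Ici_nonpos h₂)
    · exact .inr fun q => mul_nonpos_of_nonpos_of_nonneg (centeredIndicator_Ici_nonpos h₁)
        (centeredIndicator_Ici_nonneg h₂)
    · exact .inl fun q => mul_nonneg_of_nonpos_of_nonpos (centeredIndicator_Ici_nonpos h₁)
        (centeredIndicator_Ici_nonpos h₂)
  rw [← integral_centeredQuadrant hφ p]
  rcases hsign with h | h
  · simp_rw [Real.norm_of_nonneg (h _)]
    rw [abs_of_nonneg (integral_nonneg h)]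
  · simp_rw [Real.norm_of_nonpos (h _)]
    rw [integral_neg, abs_of_nonpos (integral_nonpos h)]

theorem integrable_centeredQuadrant_prod (hφ : ∀ a b, ∫ t in a..b, f t = φ b - φ a)
    {π : Measure (ℝ × ℝ)} [SFinite π] (hπ : Integrable (mixedIncrement φ) π) :
    Integrable (Function.uncurry centeredQuadrant) (π.prod (volume.prod f.measure)) := by
  rw [integrable_prod_iff measurable_centeredQuadrant.aestronglyMeasurable]
  refine ⟨ae_of_all _ (integrable_centeredQuadrant f), ?_⟩
  simpa only [Function.uncurry_apply_pair, integral_norm_centeredQuadrant hφ] using hπ.abs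

theorem integral_mixedIncrement_le_of_quadrant_le (hφ : ∀ a b, ∫ t in a..b, f t = φ b - φ a)
    {π π' : Measure (ℝ × ℝ)} [IsProbabilityMeasure π] [IsProbabilityMeasure π']
    (h₁ : π.map Prod.fst = π'.map Prod.fst) (h₂ : π.map Prod.snd = π'.map Prod.snd)
    (hπ : Integrable (mixedIncrement φ) π) (hπ' : Integrable (mixedIncrement φ) π')
    (hquad : ∀ a t, π (Ici a ×ˢ Ici t) ≤ π' (Ici a ×ˢ Ici t)) :
    ∫ p, mixedIncrement φ p ∂π ≤ ∫ p, mixedIncrement φ p ∂π' := by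
  have hswap {ρ : Measure (ℝ × ℝ)} [SFinite ρ] (hρ : Integrable (mixedIncrement φ) ρ) :
      ∫ p, mixedIncrement φ p ∂ρ = ∫ q, ∫ p, centeredQuadrant p q ∂ρ ∂(volume.prod f.measure) := by
    simp_rw [← integral_centeredQuadrant hφ]
    exact integral_integral_swap (integrable_centeredQuadrant_prod hφ hρ)
  rw [hswap hπ, hswap hπ']
  refine integral_mono (integrable_centeredQuadrant_prod hφ hπ).integral_prod_right
    (integrable_centeredQuadrant_prod hφ hπ').integral_prod_right fun q => ?_
  simp only [centeredQuadrant]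
  rw [integral_centeredIndicator_mul rfl rfl measurableSet_Ici measurableSet_Ici,
    integral_centeredIndicator_mul h₁.symm h₂.symm measurableSet_Ici measurableSet_Ici]
  have := ENNReal.toReal_mono (measure_ne_top _ _) (hquad (q.2 + q.1) q.1)
  simp only [measureReal_def]
  linarith

end Representation

section AbsRpow

variable {r : ℝ}

theorem continuous_abs_rpow (hr : 0 ≤ r) : Continuous fun x : ℝ => |x| ^ r :=
  (Real.continuous_rpow_const hr).comp continuous_abs

/-- At `t = 0` this is `r * 0 ^ (r - 1)`, which is `1` for `r = 1` (`0 ^ 0 = 1`), so it is the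
right derivative of `|t| ^ r` there as well. -/
noncomputable def absRpowDeriv (r t : ℝ) : ℝ :=
  if 0 ≤ t then r * t ^ (r - 1) else -(r * (-t) ^ (r - 1))

theorem monotone_absRpowDeriv (hr : 1 ≤ r) : Monotone (absRpowDeriv r) := by
  intro s t hst
  have hr' : 0 ≤ r - 1 := by linarith
  unfold absRpowDeriv
  split_ifs with hs ht ht
  · gcongr
  · linarith
  · have := Real.rpow_nonneg (neg_nonneg.2 (not_le.1 hs).le) (r - 1)
    have := Real.rpow_nonneg ht (r - 1)
    nlinarith
  · rw [neg_le_neg_iff]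
    gcongr
    linarith

theorem continuousWithinAt_absRpowDeriv_Ici (hr : 1 ≤ r) (x : ℝ) :
    ContinuousWithinAt (absRpowDeriv r) (Ici x) x := by
  have hr' : 0 ≤ r - 1 := by linarith
  rcases lt_or_ge x 0 with hx | hx
  · have heq : (fun t => -(r * (-t) ^ (r - 1))) =ᶠ[𝓝 x] absRpowDeriv r := by
      filter_upwards [Iio_mem_nhds hx] with t ht
      rw [absRpowDeriv, if_neg (not_le.2 ht)]
    refine (ContinuousAt.congr ?_ heq).continuousWithinAt
    fun_prop (disch := assumption)
  · refine ContinuousWithinAt.congr (f := fun t => r * t ^ (r - 1)) ?_ (fun t ht => ?_) ?_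
    · exact (continuous_const.mul (Real.continuous_rpow_const hr')).continuousWithinAt
    · rw [absRpowDeriv, if_pos (hx.trans ht)]
    · rw [absRpowDeriv, if_pos hx]

noncomputable def absRpowDerivStieltjes (hr : 1 ≤ r) : StieltjesFunction ℝ :=
  ⟨absRpowDeriv r, monotone_absRpowDeriv hr, continuousWithinAt_absRpowDeriv_Ici hr⟩

theorem hasDerivWithinAt_abs_rpow_Ioi (hr : 1 ≤ r) (x : ℝ) :
    HasDerivWithinAt (fun y => |y| ^ r) (absRpowDeriv r x) (Ioi x) x := by
  rcases lt_or_ge x 0 with hx | hx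
  · have hderiv : HasDerivAt (fun y => (-y) ^ r) (absRpowDeriv r x) x := by
      rw [absRpowDeriv, if_neg (not_le.2 hx)]
      simpa [Function.comp_def] using
        (Real.hasDerivAt_rpow_const (Or.inr hr)).comp x (hasDerivAt_neg x)
    refine (hderiv.congr_of_eventuallyEq ?_).hasDerivWithinAt
    filter_upwards [Iio_mem_nhds hx] with y hy
    rw [abs_of_neg hy]
  · rw [absRpowDeriv, if_pos hx]
    refine (Real.hasDerivAt_rpow_const (Or.inr hr)).hasDerivWithinAt.congr (fun y hy => ?_) ?_
    · rw [abs_of_nonneg (hx.trans (le_of_lt hy))]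
    · rw [abs_of_nonneg hx]

theorem intervalIntegral_absRpowDeriv (hr : 1 ≤ r) (a b : ℝ) :
    ∫ t in a..b, absRpowDeriv r t = |b| ^ r - |a| ^ r :=
  intervalIntegral.integral_eq_sub_of_hasDeriv_right
    (continuous_abs_rpow (by linarith)).continuousOn
    (fun x _ => hasDerivWithinAt_abs_rpow_Ioi hr x) (monotone_absRpowDeriv hr).intervalIntegrable

end AbsRpow

section Cost

variable {r : ℝ} {μ ν : Measure ℝ} {π : Measure (ℝ × ℝ)}

theorem abs_sub_rpow_le (hr : 1 ≤ r) (u v : ℝ) :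
    |u - v| ^ r ≤ 2 ^ (r - 1) * (|u| ^ r + |v| ^ r) := by
  calc |u - v| ^ r ≤ (|u| + |v|) ^ r :=
        Real.rpow_le_rpow (abs_nonneg _) (abs_sub u v) (by linarith)
    _ ≤ 2 ^ (r - 1) * (|u| ^ r + |v| ^ r) := by
        lift |u| to NNReal using abs_nonneg u with a
        lift |v| to NNReal using abs_nonneg v with b
        exact_mod_cast NNReal.rpow_add_le_mul_rpow_add_rpow a b hr

theorem integrable_abs_sub_rpow (hr : 1 ≤ r) (hX : Integrable (fun p : ℝ × ℝ => |p.1| ^ r) π)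
    (hY : Integrable (fun p : ℝ × ℝ => |p.2| ^ r) π) :
    Integrable (fun p : ℝ × ℝ => |p.1 - p.2| ^ r) π :=
  ((hX.add hY).const_mul _).mono' ((continuous_abs_rpow (by linarith)).comp
    (continuous_fst.sub continuous_snd)).aestronglyMeasurable
    (ae_of_all _ fun p => by
      rw [Real.norm_of_nonneg (by positivity)]
      exact abs_sub_rpow_le hr p.1 p.2)

theorem mixedIncrement_abs_rpow (hr : r ≠ 0) :
    mixedIncrement (fun x => |x| ^ r) = fun p => |p.1| ^ r + |p.2| ^ r - |p.1 - p.2| ^ r := by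
  ext p
  simp only [mixedIncrement, abs_neg, abs_zero, Real.zero_rpow hr, sub_zero]

theorem integrable_mixedIncrement_abs_rpow (hr : 1 ≤ r) (hπ₁ : π.map Prod.fst = μ)
    (hπ₂ : π.map Prod.snd = ν) (hμ : Integrable (fun x : ℝ => |x| ^ r) μ)
    (hν : Integrable (fun x : ℝ => |x| ^ r) ν) :
    Integrable (mixedIncrement fun x => |x| ^ r) π := by
  have hX : Integrable (fun p : ℝ × ℝ => |p.1| ^ r) π := (hπ₁ ▸ hμ).comp_measurable measurable_fst
  have hY : Integrable (fun p : ℝ × ℝ => |p.2| ^ r) π := (hπ₂ ▸ hν).comp_measurable measurable_snd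
  rw [mixedIncrement_abs_rpow (by linarith)]
  exact (hX.add hY).sub (integrable_abs_sub_rpow hr hX hY)

theorem integral_mixedIncrement_abs_rpow [IsProbabilityMeasure π] (hr : 1 ≤ r)
    (hπ₁ : π.map Prod.fst = μ) (hπ₂ : π.map Prod.snd = ν) (hμ : Integrable (fun x : ℝ => |x| ^ r) μ)
    (hν : Integrable (fun x : ℝ => |x| ^ r) ν) :
    ∫ p, mixedIncrement (fun x => |x| ^ r) p ∂π =
      ∫ x, |x| ^ r ∂μ + ∫ x, |x| ^ r ∂ν - ∫ p, |p.1 - p.2| ^ r ∂π := by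
  have hX : Integrable (fun p : ℝ × ℝ => |p.1| ^ r) π := (hπ₁ ▸ hμ).comp_measurable measurable_fst
  have hY : Integrable (fun p : ℝ × ℝ => |p.2| ^ r) π := (hπ₂ ▸ hν).comp_measurable measurable_snd
  have hmeas {ρ : Measure ℝ} : AEStronglyMeasurable (fun x : ℝ => |x| ^ r) ρ :=
    (continuous_abs_rpow (by linarith)).aestronglyMeasurable
  simp only [mixedIncrement_abs_rpow (by linarith : r ≠ 0)]
  rw [integral_sub (by exact hX.add hY) (integrable_abs_sub_rpow hr hX hY), integral_add hX hY,
    ← hπ₁, ← hπ₂, integral_map measurable_fst.aemeasurable hmeas,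
    integral_map measurable_snd.aemeasurable hmeas]

end Cost

theorem integral_comonotoneCoupling_le {r : ℝ} (hr : 1 ≤ r) {μ ν : Measure ℝ}
    [IsProbabilityMeasure μ] [IsProbabilityMeasure ν] (hμ : Integrable (fun x : ℝ => |x| ^ r) μ)
    (hν : Integrable (fun x : ℝ => |x| ^ r) ν) {π : Measure (ℝ × ℝ)} [IsProbabilityMeasure π]
    (hπ₁ : π.map Prod.fst = μ) (hπ₂ : π.map Prod.snd = ν) :
    ∫ p, |p.1 - p.2| ^ r ∂(comonotoneCoupling μ ν) ≤ ∫ p, |p.1 - p.2| ^ r ∂π := by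
  have hmono := integral_mixedIncrement_le_of_quadrant_le (f := absRpowDerivStieltjes hr)
    (intervalIntegral_absRpowDeriv hr) (hπ₁.trans comonotoneCoupling_map_fst.symm)
    (hπ₂.trans comonotoneCoupling_map_snd.symm)
    (integrable_mixedIncrement_abs_rpow hr hπ₁ hπ₂ hμ hν)
    (integrable_mixedIncrement_abs_rpow hr comonotoneCoupling_map_fst comonotoneCoupling_map_snd
      hμ hν)
    fun a t => measure_prod_le_comonotoneCoupling hπ₁ hπ₂ measurableSet_Ici measurableSet_Ici
      (isUpperSet_Ici a) (isUpperSet_Ici t)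
  rw [integral_mixedIncrement_abs_rpow hr hπ₁ hπ₂ hμ hν, integral_mixedIncrement_abs_rpow hr
    comonotoneCoupling_map_fst comonotoneCoupling_map_snd hμ hν] at hmono
  linarith

/-- if Z is uniform on (0,1), then (F_μ⁻¹(Z), F_ν⁻¹(Z)) is an optimal
coupling: W_r(μ,ν)^r = ∫₀¹ |F_μ⁻¹(z) − F_ν⁻¹(z)|^r dz. -/
theorem optimal_coupling_quantile (r : ℝ) (hr : 1 ≤ r)
    (μ ν : Measure ℝ) [IsProbabilityMeasure μ] [IsProbabilityMeasure ν]
    (hμ : Integrable (fun x : ℝ => |x| ^ r) μ)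
    (hν : Integrable (fun x : ℝ => |x| ^ r) ν) :
    WrPow r μ ν = ∫ z in Set.Ioo (0:ℝ) 1, |quantileFun μ z - quantileFun ν z| ^ r := by
  have hcost : ∫ z in Ioo 0 1, |quantileFun μ z - quantileFun ν z| ^ r =
      ∫ p, |p.1 - p.2| ^ r ∂(comonotoneCoupling μ ν) :=
    (integral_map aemeasurable_quantileFun_prod ((continuous_abs_rpow (by linarith)).comp
      (continuous_fst.sub continuous_snd)).aestronglyMeasurable).symm
  have hmem : ∫ p, |p.1 - p.2| ^ r ∂(comonotoneCoupling μ ν) ∈ {c : ℝ | ∃ π : Measure (ℝ × ℝ),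
      IsProbabilityMeasure π ∧ π.map Prod.fst = μ ∧ π.map Prod.snd = ν ∧
      c = ∫ p : ℝ × ℝ, |p.1 - p.2| ^ r ∂π} :=
    ⟨_, inferInstance, comonotoneCoupling_map_fst, comonotoneCoupling_map_snd, rfl⟩
  rw [WrPow, hcost]
  refine le_antisymm (csInf_le ⟨0, ?_⟩ hmem) (le_csInf ⟨_, hmem⟩ ?_)
  · rintro _ ⟨π, -, -, -, rfl⟩
    exact integral_nonneg fun p => by positivity
  · rintro _ ⟨π, hπ, hπ₁, hπ₂, rfl⟩
    exact integral_comonotoneCoupling_le hr hμ hν hπ₁ hπ₂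
end
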